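/- arXiv:2307.09291 — 8 statements merged into one kernel-verified Lean document; each statement's English description precedes it below -/
import Mathlib

section
/- (Weighted exchangeability sampling identity.) Let $Z_1,\dots,Z_n$ be i.i.d.\ from $P$ on a measurable space and $Z_{n+1}$ independent from $Q$ with $dQ/dP(z) = w(z)$ for a positive measurable $w$. Then conditionally on the unordered multiset $[Z_1,\dots,Z_{n+1}] = [z_1,\dots,z_{n+1}]$, the conditional distribution of $Z_{n+1}$ is $\sum_{i=1}^{n+1} \frac{w(z_i)}{\sum_{j=1}^{n+1} w(z_j)}\,\delta_{z_i}$. -/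
/-!
The joint law of `(Z_1, …, Z_{n+1})` is the product `P^{⊗(n+1)}` tilted by the density
`w(x_{n+1})`. For a set `B` of tuples invariant under permutations of the coordinates, the
exchangeability of `P^{⊗(n+1)}` lets us replace the tilt `w(x_{n+1})` by any `w(x_k)`, hence by
the average `(1/(n+1)) ∑ₖ w(x_k)`. Both `∫_B w(x_{n+1}) f(x_{n+1})` and
`∫_B w(x_{n+1}) · (∑ₖ w(x_k) f(x_k)) / ∑ₖ w(x_k)` thereby become `(1/(n+1)) ∫_B ∑ₖ w(x_k) f(x_k)`,
and the events determined by the multiset of values are exactly the preimages of such `B`.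
-/

open MeasureTheory ProbabilityTheory
open scoped Classical

/-- The σ-algebra on multisets of size `n+1` induced by the map sending a tuple to its multiset
of values: a set of multisets is measurable iff its preimage under `(v : Fin (n+1) → α) ↦ ⟦v⟧`
is measurable. -/
noncomputable def multisetMS (α : Type*) [MeasurableSpace α] (n : ℕ) :
    MeasurableSpace (Multiset α) :=
  MeasurableSpace.map (fun v : Fin (n + 1) → α => (List.ofFn v : Multiset α)) inferInstance

open scoped ENNReal

section Exchangeable

variable {ι α : Type*} [Fintype ι] [MeasurableSpace α] (μ : Measure α) [SigmaFinite μ]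

theorem measurePreserving_comp_perm (σ : Equiv.Perm ι) :
    MeasurePreserving (MeasurableEquiv.arrowCongr' σ.symm (.refl α))
      (Measure.pi fun _ : ι => μ) (Measure.pi fun _ : ι => μ) :=
  measurePreserving_arrowCongr' _ _ _ _ fun _ => .id μ

theorem setIntegral_comp_perm {E : Type*} [NormedAddCommGroup E] [NormedSpace ℝ E]
    (σ : Equiv.Perm ι) {B : Set (ι → α)} (hB : (fun x => x ∘ σ) ⁻¹' B = B) (g : (ι → α) → E) :
    ∫ x in B, g (x ∘ σ) ∂Measure.pi (fun _ => μ) = ∫ x in B, g x ∂Measure.pi (fun _ => μ) := by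
  have h := (measurePreserving_comp_perm μ σ).setIntegral_preimage_emb
    (MeasurableEquiv.measurableEmbedding _) g B
  rwa [show ⇑(MeasurableEquiv.arrowCongr' σ.symm (.refl α)) = fun x => x ∘ σ from rfl, hB] at h

theorem card_mul_setIntegral_eq_setIntegral_sum [DecidableEq ι] {B : Set (ι → α)}
    (hB : ∀ σ : Equiv.Perm ι, (fun x => x ∘ σ) ⁻¹' B = B) {Ψ : ι → (ι → α) → ℝ} (j : ι)
    (hΨ : ∀ k x, Ψ k x = Ψ j (x ∘ Equiv.swap j k))
    (hint : ∀ k, IntegrableOn (Ψ k) B (Measure.pi fun _ => μ)) :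
    Fintype.card ι * ∫ x in B, Ψ j x ∂Measure.pi (fun _ => μ)
      = ∫ x in B, ∑ k, Ψ k x ∂Measure.pi (fun _ => μ) := by
  rw [integral_finsetSum _ fun k _ => hint k, ← nsmul_eq_mul, ← Finset.card_univ,
    ← Finset.sum_const]
  refine Finset.sum_congr rfl fun k _ => ?_
  simp_rw [hΨ k]
  exact (setIntegral_comp_perm μ _ (hB _) (Ψ j)).symm

end Exchangeable

theorem MeasureTheory.Measure.pi_eq_withDensity_eval {ι : Type*} [Fintype ι] {α : ι → Type*}
    [∀ i, MeasurableSpace (α i)] {μ ν : ∀ i, Measure (α i)} [∀ i, SigmaFinite (μ i)]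
    [∀ i, SigmaFinite (ν i)] {i : ι} {f : α i → ℝ≥0∞} (hf : Measurable f)
    (hνi : ν i = (μ i).withDensity f) (hν : ∀ j ≠ i, ν j = μ j) :
    Measure.pi ν = (Measure.pi μ).withDensity (fun x => f (x i)) := by
  refine Measure.pi_eq fun s hs => ?_
  rw [withDensity_apply _ (.univ_pi hs), Measure.restrict_pi_pi,
    ← lintegral_map hf (measurable_pi_apply i), Measure.pi_map_eval, lintegral_smul_measure,
    ← withDensity_apply _ (hs i), ← hνi, ← Finset.prod_erase_mul _ _ (Finset.mem_univ i),
    smul_eq_mul]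
  congr 1
  refine Finset.prod_congr rfl fun j hj => ?_
  rw [Measure.restrict_apply_univ, hν j (Finset.ne_of_mem_erase hj)]

theorem integrable_of_isFiniteMeasure_withDensity_ofReal {α : Type*} [MeasurableSpace α]
    {P : Measure α} {w : α → ℝ} (hw : ∀ z, 0 ≤ w z) (hwm : Measurable w)
    [IsFiniteMeasure (P.withDensity fun z => ENNReal.ofReal (w z))] : Integrable w P := by
  refine (lintegral_ofReal_ne_top_iff_integrable hwm.aestronglyMeasurable
    (.of_forall hw)).1 ?_
  rw [← setLIntegral_univ, ← withDensity_apply _ .univ]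
  exact measure_ne_top _ _

section WeightedMean

variable {α : Type*}

noncomputable def weightedMean (w f : α → ℝ) (s : Multiset α) : ℝ :=
  (s.map fun z => w z * f z).sum / (s.map w).sum

theorem weightedMean_ofFn (w f : α → ℝ) {m : ℕ} (x : Fin m → α) :
    weightedMean w f (List.ofFn x) = (∑ i, w (x i) * f (x i)) / ∑ i, w (x i) := by
  simp [weightedMean, List.sum_ofFn]

theorem abs_weightedMean_le {w f : α → ℝ} {C : ℝ} (hw : ∀ z, 0 ≤ w z) (hC : 0 ≤ C)
    (hf : ∀ z, |f z| ≤ C) (s : Multiset α) : |weightedMean w f s| ≤ C := by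
  have hnum : |(s.map fun z => w z * f z).sum| ≤ C * (s.map w).sum := by
    induction s using Multiset.induction_on with
    | empty => simp
    | cons a s ih =>
      simp only [Multiset.map_cons, Multiset.sum_cons, mul_add]
      refine (abs_add_le _ _).trans (add_le_add ?_ ih)
      rw [abs_mul, abs_of_nonneg (hw a), mul_comm]
      exact mul_le_mul_of_nonneg_right (hf a) (hw a)
  have hden : 0 ≤ (s.map w).sum := Multiset.sum_nonneg fun _ hz => by
    obtain ⟨z, -, rfl⟩ := Multiset.mem_map.1 hz
    exact hw z
  rw [weightedMean, abs_div, abs_of_nonneg hden]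
  exact div_le_of_le_mul₀ hden hC hnum

theorem measurable_weightedMean_ofFn [MeasurableSpace α] {w f : α → ℝ}
    (hw : Measurable w) (hf : Measurable f) (m : ℕ) :
    Measurable fun x : Fin m → α => weightedMean w f (List.ofFn x) := by
  simp_rw [weightedMean_ofFn]
  fun_prop

end WeightedMean

theorem setIntegral_mul_weightedMean {α : Type*} [MeasurableSpace α] (P : Measure α)
    [IsProbabilityMeasure P] {w f : α → ℝ} (hw : ∀ z, 0 < w z) (hwm : Measurable w)
    (hwP : Integrable w P) (hfm : Measurable f) {C : ℝ} (hfC : ∀ z, |f z| ≤ C) {m : ℕ}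
    {B : Set (Fin m → α)} (hB : ∀ σ : Equiv.Perm (Fin m), (fun x => x ∘ σ) ⁻¹' B = B)
    (j : Fin m) :
    ∫ x in B, w (x j) * weightedMean w f (List.ofFn x) ∂Measure.pi (fun _ => P)
      = ∫ x in B, w (x j) * f (x j) ∂Measure.pi (fun _ => P) := by
  have hint : ∀ k {g : (Fin m → α) → ℝ}, Measurable g → (∀ x, |g x| ≤ C) →
      IntegrableOn (fun x => w (x k) * g x) B (Measure.pi fun _ => P) := fun k _ hg hgC =>
    (((measurePreserving_eval _ k).integrable_comp_of_integrable hwP).mul_bdd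
      hg.aestronglyMeasurable (.of_forall hgC)).integrableOn
  have hmean := card_mul_setIntegral_eq_setIntegral_sum P hB j
    (Ψ := fun k x => w (x k) * weightedMean w f (List.ofFn x))
    (fun k x => by
      rw [Function.comp_apply, Equiv.swap_apply_left,
        Multiset.coe_eq_coe.2 ((Equiv.swap j k).ofFn_comp_perm x)])
    (fun k => hint k (measurable_weightedMean_ofFn hwm hfm m) fun x =>
      abs_weightedMean_le (fun z => (hw z).le) ((abs_nonneg _).trans (hfC (x j))) hfC _)
  have hpoint := card_mul_setIntegral_eq_setIntegral_sum P hB j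
    (Ψ := fun k x => w (x k) * f (x k)) (fun k x => by simp)
    (fun k => hint k (hfm.comp (measurable_pi_apply k)) fun x => hfC (x k))
  have : Nonempty (Fin m) := ⟨j⟩
  refine mul_left_cancel₀ (Nat.cast_ne_zero.2 (Fintype.card_ne_zero (α := Fin m))) ?_
  rw [hmean, hpoint]
  congr 1 with x
  have hden : (∑ i, w (x i)) ≠ 0 :=
    (Finset.sum_pos (fun i _ => hw (x i)) Finset.univ_nonempty).ne'
  rw [← Finset.sum_mul, weightedMean_ofFn, mul_div_cancel₀ _ hden]

theorem map_tuple_eq_pi_withDensity {Ω α : Type*} [MeasurableSpace Ω] [MeasurableSpace α]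
    {P0 : Measure Ω} {P : Measure α} [IsProbabilityMeasure P] {w : α → ℝ} (hwm : Measurable w)
    {n : ℕ} {Z : Fin (n + 1) → Ω → α} (hZm : ∀ i, Measurable (Z i))
    (hPlaw : ∀ i : Fin n, P0.map (Z i.castSucc) = P)
    (hQlaw : P0.map (Z (Fin.last n)) = P.withDensity fun z => ENNReal.ofReal (w z))
    (hindep : iIndepFun Z P0) :
    P0.map (fun ω i => Z i ω)
      = (Measure.pi fun _ => P).withDensity fun x => ENNReal.ofReal (w (x (Fin.last n))) := by
  have := hindep.isProbabilityMeasure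
  have (i : Fin (n + 1)) : IsProbabilityMeasure (P0.map (Z i)) :=
    Measure.isProbabilityMeasure_map (hZm i).aemeasurable
  have hP (j : Fin (n + 1)) (hj : j ≠ Fin.last n) : P0.map (Z j) = P := by
    obtain ⟨i, rfl⟩ := Fin.exists_castSucc_eq.2 hj
    exact hPlaw i
  rw [hindep.map_fun_eq_pi_map fun i => (hZm i).aemeasurable]
  exact (Measure.pi_eq_withDensity_eval (μ := fun _ => P) (ν := fun i => P0.map (Z i))
    hwm.ennreal_ofReal hQlaw hP :)

theorem condExp_last_ae_eq_weightedMean {Ω α : Type*} [MeasurableSpace Ω] [MeasurableSpace α]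
    {P0 : Measure Ω} {P : Measure α} [IsProbabilityMeasure P] {w : α → ℝ} (hw : ∀ z, 0 < w z)
    (hwm : Measurable w) {n : ℕ} {Z : Fin (n + 1) → Ω → α} (hZm : ∀ i, Measurable (Z i))
    (hPlaw : ∀ i : Fin n, P0.map (Z i.castSucc) = P)
    (hQlaw : P0.map (Z (Fin.last n)) = P.withDensity fun z => ENNReal.ofReal (w z))
    (hindep : iIndepFun Z P0) {f : α → ℝ} (hfm : Measurable f) {C : ℝ}
    (hfC : ∀ z, |f z| ≤ C) :
    P0[fun ω => f (Z (Fin.last n) ω) |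
        MeasurableSpace.comap (fun ω => (List.ofFn (fun i => Z i ω) : Multiset α))
          (multisetMS α n)]
      =ᵐ[P0] fun ω => weightedMean w f (List.ofFn fun i => Z i ω) := by
  have := hindep.isProbabilityMeasure
  set V : Ω → Fin (n + 1) → α := fun ω i => Z i ω
  have hV : Measurable V := measurable_pi_lambda _ hZm
  set π := Measure.pi fun _ : Fin (n + 1) => P
  have hlaw : P0.map V = π.withDensity fun x => ENNReal.ofReal (w (x (Fin.last n))) :=
    map_tuple_eq_pi_withDensity hwm hZm hPlaw hQlaw hindep
  have hwP : Integrable w P := by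
    have : IsProbabilityMeasure (P.withDensity fun z => ENNReal.ofReal (w z)) :=
      hQlaw ▸ Measure.isProbabilityMeasure_map (hZm _).aemeasurable
    exact integrable_of_isFiniteMeasure_withDensity_ofReal (fun z => (hw z).le) hwm
  have htransfer {B : Set (Fin (n + 1) → α)} (hB : MeasurableSet B)
      {G : (Fin (n + 1) → α) → ℝ} (hG : Measurable G) :
      ∫ ω in V ⁻¹' B, G (V ω) ∂P0 = ∫ x in B, w (x (Fin.last n)) * G x ∂π := by
    rw [← setIntegral_map hB hG.aestronglyMeasurable hV.aemeasurable, hlaw,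
      setIntegral_withDensity_eq_setIntegral_toReal_smul (by fun_prop)
        (.of_forall fun _ => ENNReal.ofReal_lt_top) _ hB]
    simp_rw [ENNReal.toReal_ofReal (hw _).le, smul_eq_mul]
  have hmeanm : Measurable[multisetMS α n] (weightedMean w f) :=
    fun _ hs => measurable_weightedMean_ofFn hwm hfm (n + 1) hs
  have hmultiset : Measurable[_, multisetMS α n] fun ω => (List.ofFn (V ω) : Multiset α) :=
    fun s hs => hV hs
  refine (ae_eq_condExp_of_forall_setIntegral_eq hmultiset.comap_le ?_ (fun s _ _ => ?_) ?_
    ((hmeanm.comp (comap_measurable _)).aestronglyMeasurable)).symm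
  · exact .of_bound (hfm.comp (hZm _)).aestronglyMeasurable C (.of_forall fun ω => hfC _)
  · refine (Integrable.of_bound (hmeanm.comp hmultiset).aestronglyMeasurable C
      (.of_forall fun ω => ?_)).integrableOn
    exact abs_weightedMean_le (fun z => (hw z).le) ((abs_nonneg _).trans (hfC (Z 0 ω))) hfC _
  · rintro _ ⟨t, ht, rfl⟩ -
    have hsymm (σ : Equiv.Perm (Fin (n + 1))) :
        (fun x => x ∘ σ) ⁻¹' ((fun x => ((List.ofFn x : List α) : Multiset α)) ⁻¹' t)
          = (fun x => ((List.ofFn x : List α) : Multiset α)) ⁻¹' t := by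
      ext x
      simp only [Set.mem_preimage, Multiset.coe_eq_coe.2 (σ.ofFn_comp_perm x)]
    exact (htransfer ht (measurable_weightedMean_ofFn hwm hfm _)).trans
      ((setIntegral_mul_weightedMean P hw hwm hwP hfm hfC hsymm _).trans
        (htransfer ht (hfm.comp (measurable_pi_apply _))).symm)

theorem stmt4_general {Ω α : Type*} [MeasurableSpace Ω] [MeasurableSpace α]
    (P0 : Measure Ω)
    (P : Measure α) [IsProbabilityMeasure P]
    (w : α → ℝ) (hw : ∀ z, 0 < w z) (hwm : Measurable w)
    (n : ℕ) (Z : Fin (n + 1) → Ω → α) (hZm : ∀ i, Measurable (Z i))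
    (hPlaw : ∀ i : Fin n, Measure.map (Z i.castSucc) P0 = P)
    (hQlaw : Measure.map (Z (Fin.last n)) P0 = P.withDensity (fun z => ENNReal.ofReal (w z)))
    (hindep : iIndepFun Z P0) :
    ∀ A : Set α, MeasurableSet A →
      (P0[fun ω => Set.indicator A (fun _ => (1 : ℝ)) (Z (Fin.last n) ω) |
          MeasurableSpace.comap (fun ω => (List.ofFn (fun i => Z i ω) : Multiset α))
            (multisetMS α n)])
        =ᵐ[P0]
      fun ω => (∑ i, w (Z i ω) * (if Z i ω ∈ A then (1 : ℝ) else 0)) / (∑ i, w (Z i ω)) := by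
  intro A hA
  have hbound (z : α) : |A.indicator (fun _ => (1 : ℝ)) z| ≤ 1 := by
    rw [Set.indicator_apply]
    split_ifs <;> simp
  refine (condExp_last_ae_eq_weightedMean hw hwm hZm hPlaw hQlaw hindep
    (measurable_const.indicator hA) hbound).trans (.of_forall fun ω => ?_)
  simp only [weightedMean_ofFn, Set.indicator_apply]

/-- Weighted exchangeability sampling identity: if `Z_1,…,Z_n` are i.i.d. from `P` and `Z_{n+1}`
is an independent draw from `Q` with `dQ/dP = w`, then conditionally on the unordered multiset
`[Z_1,…,Z_{n+1}]`, the conditional distribution of `Z_{n+1}` is the weighted mixture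
`∑ᵢ w(zᵢ)δ_{zᵢ} / ∑ⱼ w(zⱼ)`; stated via conditional expectations of indicators of measurable
sets `A`. -/
theorem stmt4 {Ω α : Type*} [MeasurableSpace Ω] [MeasurableSpace α]
    (P0 : Measure Ω) [IsProbabilityMeasure P0]
    (P : Measure α) [IsProbabilityMeasure P]
    (w : α → ℝ) (hw : ∀ z, 0 < w z) (hwm : Measurable w)
    (n : ℕ) (Z : Fin (n + 1) → Ω → α) (hZm : ∀ i, Measurable (Z i))
    (hPlaw : ∀ i : Fin n, Measure.map (Z i.castSucc) P0 = P)
    (hQlaw : Measure.map (Z (Fin.last n)) P0 = P.withDensity (fun z => ENNReal.ofReal (w z)))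
    (hQprob : IsProbabilityMeasure (P.withDensity (fun z => ENNReal.ofReal (w z))))
    (hindep : iIndepFun Z P0) :
    ∀ A : Set α, MeasurableSet A →
      (P0[fun ω => Set.indicator A (fun _ => (1 : ℝ)) (Z (Fin.last n) ω) |
          MeasurableSpace.comap (fun ω => (List.ofFn (fun i => Z i ω) : Multiset α))
            (multisetMS α n)])
        =ᵐ[P0]
      fun ω => (∑ i, w (Z i ω) * (if Z i ω ∈ A then (1 : ℝ) else 0)) / (∑ i, w (Z i ω)) :=
  stmt4_general P0 P w hw hwm n Z hZm hPlaw hQlaw hindep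
end

section
/- (Conditional uniformity of the oracle weighted rank.) Let $z_1,\dots,z_{n+1}$ be fixed points with positive weights $w_1,\dots,w_{n+1}$ and real scores $v_1,\dots,v_{n+1}$. Let $I$ be a random index with $\mathbb{P}(I = i) = w_i / \sum_j w_j$, and let $U\sim\mathrm{Unif}[0,1]$ be independent of $I$. Define $p^* = \frac{\sum_{i} w_i \mathbf{1}\{v_i < v_I\} + U\,(\sum_i w_i \mathbf{1}\{v_i = v_I\})}{\sum_i w_i}$. Then $p^* \sim \mathrm{Unif}[0,1]$. -/
open MeasureTheory ProbabilityTheory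
open scoped Classical

/-!
Write `a i` for the weight strictly below `v i` and `b i` for the weight tied with it. Given
`I = i`, the rank `p*` is uniform on `[a i / W, (a i + b i) / W]`, so `P(p* ≤ t)` is a
`w i / W`-weighted sum of clamped linear functions of `t`. Grouping the indices by their score,
each tie group contributes its total weight times the uniform distribution function on its
interval, and in increasing order of score these intervals tile `[0, W]` end to end; the sum
therefore telescopes to `min (max t 0) 1`.
-/

/-- The distribution function of the uniform law on `[0, 1]`. -/
def unitClamp (x : ℝ) : ℝ := max 0 (min x 1)

lemma unitClamp_nonneg (x : ℝ) : 0 ≤ unitClamp x := le_max_left _ _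

lemma max_zero_min_add_mul_unitClamp {A m : ℝ} (hA : 0 ≤ A) (hm : 0 ≤ m) (s : ℝ) :
    max 0 (min s A) + m * unitClamp ((s - A) / m) = max 0 (min s (A + m)) := by
  rcases hm.eq_or_lt with rfl | hm
  · simp
  rw [unitClamp, mul_max_of_nonneg _ _ hm.le, mul_min_of_nonneg _ _ hm.le,
    mul_div_cancel₀ _ hm.ne', mul_zero, mul_one]
  rcases le_total s 0 with h1 | h1 <;> rcases le_total s A with h2 | h2 <;>
    rcases le_total s (A + m) with h3 | h3 <;>
    simp only [min_eq_left, min_eq_right, max_eq_left, max_eq_right, *] <;> grind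

theorem sum_mul_unitClamp_sub_sum_lt {α : Type*} [LinearOrder α] (T : Finset α) (μ : α → ℝ)
    (hμ : ∀ x ∈ T, 0 ≤ μ x) (s : ℝ) :
    ∑ x ∈ T, μ x * unitClamp ((s - ∑ y ∈ T with y < x, μ y) / μ x) =
      max 0 (min s (∑ x ∈ T, μ x)) := by
  induction T using Finset.induction_on_max with
  | empty => simp
  | insert a T hlt ih =>
    have ha : a ∉ T := fun h => (hlt a h).false
    have hμT : ∀ x ∈ T, 0 ≤ μ x := fun x hx => hμ x (Finset.mem_insert_of_mem hx)
    have hbelow_a : (insert a T).filter (· < a) = T := by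
      rw [Finset.filter_insert, if_neg (lt_irrefl a), Finset.filter_true_of_mem hlt]
    have hbelow : ∀ x ∈ T, (insert a T).filter (· < x) = T.filter (· < x) := fun x hx => by
      rw [Finset.filter_insert, if_neg (hlt x hx).not_gt]
    have hsumT : ∑ x ∈ T, μ x * unitClamp ((s - ∑ y ∈ insert a T with y < x, μ y) / μ x) =
        max 0 (min s (∑ x ∈ T, μ x)) := by
      rw [← ih hμT]
      exact Finset.sum_congr rfl fun x hx => by rw [hbelow x hx]
    rw [Finset.sum_insert ha, Finset.sum_insert ha, hbelow_a, add_comm, hsumT, add_comm (μ a)]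
    exact max_zero_min_add_mul_unitClamp (Finset.sum_nonneg hμT)
      (hμ a (Finset.mem_insert_self a T)) s

theorem sum_mul_comp_eq_sum_image {ι α : Type*} [Fintype ι] [DecidableEq α] (w : ι → ℝ)
    (v : ι → α) (g : α → ℝ) :
    ∑ i, w i * g (v i) =
      ∑ x ∈ Finset.univ.image v, (∑ j, w j * (if v j = x then 1 else 0)) * g x := by
  rw [← Finset.sum_fiberwise_of_maps_to (g := v) fun i hi => Finset.mem_image_of_mem v hi]
  refine Finset.sum_congr rfl fun x _ => ?_
  simp only [Finset.sum_mul, mul_assoc, mul_ite, one_mul, mul_zero, ← Finset.sum_filter]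
  exact Finset.sum_congr rfl fun i hi => by rw [(Finset.mem_filter.1 hi).2]

theorem sum_mul_unitClamp_weightedRank {ι α : Type*} [Fintype ι] [LinearOrder α]
    (w : ι → ℝ) (hw : ∀ i, 0 ≤ w i) (v : ι → α) (s : ℝ) :
    ∑ i, w i * unitClamp ((s - ∑ j, w j * (if v j < v i then 1 else 0)) /
        ∑ j, w j * (if v j = v i then 1 else 0)) = max 0 (min s (∑ i, w i)) := by
  set μ : α → ℝ := fun x => ∑ j, w j * (if v j = x then 1 else 0)
  set T := Finset.univ.image v
  have hbelow : ∀ i, ∑ j, w j * (if v j < v i then 1 else 0) = ∑ y ∈ T with y < v i, μ y := by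
    intro i
    rw [sum_mul_comp_eq_sum_image w v (fun y => if y < v i then 1 else 0), Finset.sum_filter]
    exact Finset.sum_congr rfl fun y _ => mul_boole _ _
  have htotal : ∑ i, w i = ∑ x ∈ T, μ x := by
    simpa only [mul_one] using sum_mul_comp_eq_sum_image w v fun _ => 1
  simp only [hbelow]
  rw [sum_mul_comp_eq_sum_image w v (fun x => unitClamp ((s - ∑ y ∈ T with y < x, μ y) / μ x)),
    htotal]
  exact sum_mul_unitClamp_sub_sum_lt T μ
    (fun x _ => Finset.sum_nonneg fun j _ => mul_nonneg (hw j) (by split_ifs <;> norm_num)) s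

theorem volume_Iic_inter_Icc_zero_one (c : ℝ) :
    volume (Set.Iic c ∩ Set.Icc 0 1) = ENNReal.ofReal (unitClamp c) := by
  have hset : Set.Iic c ∩ Set.Icc 0 1 = Set.Icc 0 (min c 1) := by
    ext x
    simp only [Set.mem_inter_iff, Set.mem_Iic, Set.mem_Icc, le_min_iff]
    tauto
  rw [hset, Real.volume_Icc, sub_zero, unitClamp, ENNReal.ofReal_max, ENNReal.ofReal_zero,
    max_eq_right zero_le]

theorem measure_add_mul_le_eq_sum {Ω ι : Type*} [MeasurableSpace Ω] [Fintype ι]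
    [MeasurableSpace ι] [MeasurableSingletonClass ι] (P : Measure Ω) {I : Ω → ι} {U : Ω → ℝ}
    (hI : Measurable I) (hU : Measurable U)
    (hUlaw : P.map U = volume.restrict (Set.Icc 0 1)) (hindep : IndepFun I U P)
    (a b : ι → ℝ) (hb : ∀ i, 0 < b i) (s : ℝ) :
    P {ω | a (I ω) + U ω * b (I ω) ≤ s} =
      ∑ i, P {ω | I ω = i} * ENNReal.ofReal (unitClamp ((s - a i) / b i)) := by
  have hpre : {ω | a (I ω) + U ω * b (I ω) ≤ s} =
      ⋃ i, I ⁻¹' {i} ∩ U ⁻¹' Set.Iic ((s - a i) / b i) := by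
    ext ω
    simp [le_div_iff₀ (hb _), le_sub_iff_add_le']
  rw [hpre, measure_iUnion, tsum_fintype]
  · refine Finset.sum_congr rfl fun i _ => ?_
    rw [hindep.measure_inter_preimage_eq_mul _ _ (measurableSet_singleton i) measurableSet_Iic,
      ← Measure.map_apply hU measurableSet_Iic, hUlaw, Measure.restrict_apply measurableSet_Iic,
      volume_Iic_inter_Icc_zero_one]
    rfl
  · exact (pairwise_disjoint_fiber I).mono fun i j h =>
      h.mono Set.inter_subset_left Set.inter_subset_left
  · exact fun i => (hI (measurableSet_singleton i)).inter (hU measurableSet_Iic)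

/-- Conditional uniformity of the oracle weighted rank: if `I` is drawn with probability
proportional to the weights `w i` and `U` is an independent uniform tie-breaker, then the
randomized weighted rank `p* = (∑ᵢ wᵢ1{vᵢ < v_I} + U·∑ᵢ wᵢ1{vᵢ = v_I})/∑ᵢ wᵢ` is exactly
uniform on `[0,1]`. -/
theorem stmt5 {Ω : Type*} [MeasurableSpace Ω] (P : Measure Ω) [IsProbabilityMeasure P]
    (n : ℕ) (w : Fin (n + 1) → ℝ) (hw : ∀ i, 0 < w i) (v : Fin (n + 1) → ℝ)
    (I : Ω → Fin (n + 1)) (hI : Measurable I)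
    (hIlaw : ∀ i, P {ω | I ω = i} = ENNReal.ofReal (w i / ∑ j, w j))
    (U : Ω → ℝ) (hU : Measurable U)
    (hUlaw : Measure.map U P = volume.restrict (Set.Icc 0 1))
    (hindep : IndepFun I U P) :
    Measure.map (fun ω =>
        ((∑ i, w i * (if v i < v (I ω) then 1 else 0)) +
          U ω * (∑ i, w i * (if v i = v (I ω) then 1 else 0))) / (∑ i, w i)) P =
      volume.restrict (Set.Icc 0 1) := by
  set W := ∑ i, w i
  set a : Fin (n + 1) → ℝ := fun i => ∑ j, w j * (if v j < v i then 1 else 0)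
  set b : Fin (n + 1) → ℝ := fun i => ∑ j, w j * (if v j = v i then 1 else 0)
  change Measure.map (fun ω => (a (I ω) + U ω * b (I ω)) / W) P = _
  have hW : 0 < W := Finset.sum_pos (fun i _ => hw i) Finset.univ_nonempty
  have hb : ∀ i, 0 < b i := fun i => calc
    0 < w i * (if v i = v i then 1 else 0) := by simpa using hw i
    _ ≤ b i := Finset.single_le_sum (f := fun j => w j * (if v j = v i then 1 else 0))
      (fun j _ => mul_nonneg (hw j).le (by split_ifs <;> norm_num)) (Finset.mem_univ i)
  have hmeas : Measurable fun ω => (a (I ω) + U ω * b (I ω)) / W :=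
    (((measurable_of_countable a).comp hI).add
      (hU.mul ((measurable_of_countable b).comp hI))).div_const W
  refine Measure.ext_of_Iic _ _ fun t => ?_
  have hpre : (fun ω => (a (I ω) + U ω * b (I ω)) / W) ⁻¹' Set.Iic t =
      {ω | a (I ω) + U ω * b (I ω) ≤ t * W} := by
    ext ω
    simp [div_le_iff₀ hW]
  rw [Measure.map_apply hmeas measurableSet_Iic, Measure.restrict_apply measurableSet_Iic,
    volume_Iic_inter_Icc_zero_one, hpre, measure_add_mul_le_eq_sum P hI hU hUlaw hindep a b hb]
  simp_rw [hIlaw, ← ENNReal.ofReal_mul (div_nonneg (hw _).le hW.le)]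
  rw [← ENNReal.ofReal_sum_of_nonneg fun i _ =>
    mul_nonneg (div_nonneg (hw i).le hW.le) (unitClamp_nonneg _)]
  congr 1
  simp_rw [div_mul_eq_mul_div, ← Finset.sum_div]
  rw [sum_mul_unitClamp_weightedRank w (fun i => (hw i).le) v, div_eq_iff hW.ne', unitClamp,
    max_mul_of_nonneg _ _ hW.le, min_mul_of_nonneg _ _ hW.le, zero_mul, one_mul]
end

section
/- (FDR reduction for deterministic pruning.) Let $p_1,\dots,p_m \in [0,1]$ and $s_1,\dots,s_m \ge 0$, and positive integers $R_1,\dots,R_m$ (think $R_j = |\hat{\mathcal{R}}_{j\to0}|$). Let $\mathcal{R}^{(1)} = \{j : p_j \le s_j\}$, $r^* = \max\{r \ge 0 : \#\{j : p_j \le s_j,\ R_j \le r\} \ge r\}$, and $\mathcal{R} = \{j : p_j \le s_j,\ R_j \le r^*\}$. Then $|\mathcal{R}| = r^*$ and every $j \in \mathcal{R}$ satisfies $R_j \le |\mathcal{R}|$; consequently, for any subset $\mathcal{H}_0 \subseteq \{1,\dots,m\}$, $\frac{|\mathcal{R}\cap\mathcal{H}_0|}{\max(1,|\mathcal{R}|)}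 \le \sum_{j\in\mathcal{H}_0} \frac{\mathbf{1}\{p_j \le s_j\}}{R_j}$. -/
open Finset in
/-- FDR reduction for deterministic pruning: with `R* = max {r : #{j : p_j ≤ s_j, R_j ≤ r} ≥ r}`
and `𝓡 = {j : p_j ≤ s_j, R_j ≤ r*}`, we have `|𝓡| = r*`, every selected `j` has `R_j ≤ |𝓡|`,
and the false discovery proportion over any `H₀` is bounded by the sum of `1{p_j ≤ s_j}/R_j`. -/
theorem stmt7 (m : ℕ) (p s : Fin m → ℝ) (R : Fin m → ℕ) (hR : ∀ j, 1 ≤ R j) :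
    ∀ count : ℕ → ℕ, count = (fun r => (univ.filter (fun j => p j ≤ s j ∧ R j ≤ r)).card) →
    ∀ rstar : ℕ, rstar = Nat.findGreatest (fun r => r ≤ count r) m →
    ∀ Rsel : Finset (Fin m), Rsel = univ.filter (fun j => p j ≤ s j ∧ R j ≤ rstar) →
      Rsel.card = rstar ∧ (∀ j ∈ Rsel, R j ≤ Rsel.card) ∧
        ∀ H0 : Finset (Fin m),
          ((Rsel ∩ H0).card : ℝ) / max 1 (Rsel.card : ℝ) ≤
            ∑ j ∈ H0, (if p j ≤ s j then (1 : ℝ) else 0) / (R j : ℝ) := by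
  intro count hcount rstar hrstar Rsel hRsel
  have hmono : Monotone count := by
    intro a b hab
    subst hcount
    apply Finset.card_le_card
    intro j hj
    simp only [Finset.mem_filter] at hj ⊢
    exact ⟨hj.1, hj.2.1, le_trans hj.2.2 hab⟩
  have hcle : ∀ r, count r ≤ m := by
    intro r; rw [hcount]
    exact le_trans (Finset.card_filter_le _ _) (by simp)
  have h1 : rstar ≤ count rstar := by
    rw [hrstar]
    exact Nat.findGreatest_spec (P := fun r => r ≤ count r) (Nat.zero_le m) (Nat.zero_le _)
  have h2 : count rstar ≤ rstar := by
    by_contra h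
    push_neg at h
    have hk1 : rstar + 1 ≤ count rstar := h
    have hkm : rstar + 1 ≤ m := le_trans hk1 (hcle rstar)
    have hPk : rstar + 1 ≤ count (rstar + 1) :=
      le_trans hk1 (hmono (Nat.le_succ _))
    exact Nat.findGreatest_is_greatest (P := fun r => r ≤ count r) (n := m) (by omega) hkm hPk
  have hcard : Rsel.card = rstar := by
    rw [hRsel]
    have : count rstar = rstar := le_antisymm h2 h1
    rw [hcount] at this; exact this
  refine ⟨hcard, fun j hj => ?_, fun H0 => ?_⟩
  · rw [hcard]
    exact (Finset.mem_filter.1 (hRsel ▸ hj)).2.2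
  · have hmax : max 1 (Rsel.card : ℝ) = max 1 (rstar : ℝ) := by rw [hcard]
    have hpos : (0:ℝ) < max 1 (rstar : ℝ) := lt_of_lt_of_le one_pos (le_max_left _ _)
    have key : ∀ j ∈ Rsel ∩ H0, (1:ℝ)/(max 1 (rstar:ℝ)) ≤
        (if p j ≤ s j then (1 : ℝ) else 0) / (R j : ℝ) := by
      intro j hj
      have hjR := Finset.mem_filter.1 (hRsel ▸ (Finset.mem_inter.1 hj).1)
      rw [if_pos hjR.2.1]
      have hRpos : (0:ℝ) < R j := by exact_mod_cast hR j
      have hRle : (R j : ℝ) ≤ max 1 (rstar:ℝ) :=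
        le_trans (by exact_mod_cast hjR.2.2) (le_max_right _ _)
      exact one_div_le_one_div_of_le hRpos hRle
    calc ((Rsel ∩ H0).card : ℝ) / max 1 (Rsel.card : ℝ)
        = ∑ _j ∈ Rsel ∩ H0, (1:ℝ)/(max 1 (rstar:ℝ)) := by
          rw [hmax, Finset.sum_const, nsmul_eq_mul, mul_one_div]
      _ ≤ ∑ j ∈ Rsel ∩ H0, (if p j ≤ s j then (1 : ℝ) else 0) / (R j : ℝ) :=
          Finset.sum_le_sum key
      _ ≤ ∑ j ∈ H0, (if p j ≤ s j then (1 : ℝ) else 0) / (R j : ℝ) := by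
          refine Finset.sum_le_sum_of_subset_of_nonneg (Finset.inter_subset_right) ?_
          intro j _ _
          positivity
end

section
/- (FDR reduction for heterogeneous pruning.) Let the data $\mathcal{D}$ determine values $p_j, s_j \ge 0$ and positive integers $R_j$ for $j=1,\dots,m$, and let $\xi_1,\dots,\xi_m$ be i.i.d.\ $\mathrm{Unif}[0,1]$ independent of $\mathcal{D}$. Define $r^* = \max\{r : \#\{j : p_j\le s_j,\ \xi_j R_j \le r\} \ge r\}$ and $\mathcal{R} = \{j : p_j\le s_j,\ \xi_j R_j \le r^*\}$, so $|\mathcal{R}| = r^*$. Let $N_1,\dots,N_m$ be 0-1 random variables measurable with respect to $\mathcal{D}$ (indicators of null hypotheses). Then $\mathbb{E}\Big[\frac{\sum_{j} N_j \mathbf{1}\{j\in\mathcal{R}\}}{\max(1,|\mathcal{R}|)}\Big] \le \sum_{j=1}^m \mathbb{E}\Big[\frac{N_j\,\mathbf{1}\{p_j \le s_j\}}{R_j}\Big]$. -/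
/-!
If `j` is selected, lowering its score `ξ j` to `0` does not change the threshold `r*`.
Hence `1{j ∈ 𝓡} / max 1 |𝓡| ≤ 1{p j ≤ s j} 1{ξ j R j ≤ r j} / max 1 r j`, where `r j` is
the threshold computed with `ξ j` replaced by `0`: a function of the data and of the other
scores only. Integrating out the uniform `ξ j`, independent of `r j`, bounds the expectation
by `1{p j ≤ s j} (r j / R j) / max 1 r j ≤ 1{p j ≤ s j} / R j`; summing over `j` against
`N j` gives the claim.
-/

open MeasureTheory ProbabilityTheory Finset
open scoped Classical

open Function

noncomputable section

namespace Pruning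

section FdpWeight

variable {ι : Type*} [DecidableEq ι]

def fdpWeight (S : Finset ι) (j : ι) : ℝ := (if j ∈ S then 1 else 0) / max 1 (#S : ℝ)

lemma fdpWeight_nonneg (S : Finset ι) (j : ι) : 0 ≤ fdpWeight S j := by
  unfold fdpWeight; positivity

lemma norm_fdpWeight_le_one (S : Finset ι) (j : ι) : ‖fdpWeight S j‖ ≤ 1 := by
  rw [Real.norm_of_nonneg (fdpWeight_nonneg S j), fdpWeight, div_le_one (by positivity)]
  split_ifs <;> simp

end FdpWeight

section Selection

variable {ι : Type*} [Fintype ι] (p s : ι → ℝ) (w : ι → ℕ)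

def candidates (x : ι → ℝ) (r : ℕ) : Finset ι :=
  univ.filter fun i => p i ≤ s i ∧ x i * w i ≤ r

def threshold (n : ℕ) (x : ι → ℝ) : ℕ :=
  Nat.findGreatest (fun r => r ≤ #(candidates p s w x r)) n

def selection (n : ℕ) (x : ι → ℝ) : Finset ι :=
  candidates p s w x (threshold p s w n x)

variable {p s w} {n : ℕ} {x : ι → ℝ} {j : ι}

lemma threshold_le_card_selection : threshold p s w n x ≤ #(selection p s w n x) :=
  Nat.findGreatest_spec (P := fun r => r ≤ #(candidates p s w x r)) (Nat.zero_le n)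
    (Nat.zero_le _)

variable [DecidableEq ι]

lemma candidates_subset_update_zero (r : ℕ) :
    candidates p s w x r ⊆ candidates p s w (update x j 0) r := by
  intro i hi
  simp only [candidates, mem_filter_univ] at hi ⊢
  refine ⟨hi.1, ?_⟩
  rcases eq_or_ne i j with rfl | hij
  · simp
  · simpa [update_of_ne hij] using hi.2

lemma threshold_le_threshold_update_zero :
    threshold p s w n x ≤ threshold p s w n (update x j 0) :=
  Nat.findGreatest_mono
    (fun _ hr => hr.trans (card_le_card (candidates_subset_update_zero _))) le_rfl

lemma threshold_update_zero_of_mem_selection (hj : j ∈ selection p s w n x) :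
    threshold p s w n (update x j 0) = threshold p s w n x := by
  refine le_antisymm ?_ threshold_le_threshold_update_zero
  set r := threshold p s w n (update x j 0)
  simp only [selection, candidates, mem_filter_univ] at hj
  have hsub : candidates p s w (update x j 0) r ⊆ candidates p s w x r := by
    intro i hi
    simp only [candidates, mem_filter_univ] at hi ⊢
    refine ⟨hi.1, ?_⟩
    rcases eq_or_ne i j with rfl | hij
    · exact hj.2.trans (Nat.cast_le.2 threshold_le_threshold_update_zero)
    · simpa [update_of_ne hij] using hi.2
  exact Nat.le_findGreatest (Nat.findGreatest_le n)
    ((threshold_le_card_selection (x := update x j 0)).trans (card_le_card hsub))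

lemma fdpWeight_selection_le (hw : 0 < w j) :
    fdpWeight (selection p s w n x) j ≤
      (Set.Iic ((threshold p s w n (update x j 0) : ℝ) / w j)).indicator
        (fun _ => (if p j ≤ s j then 1 else 0) / max 1 (threshold p s w n (update x j 0) : ℝ))
        (x j) := by
  by_cases hj : j ∈ selection p s w n x
  · have hj' := hj
    simp only [selection, candidates, mem_filter_univ] at hj'
    rw [threshold_update_zero_of_mem_selection hj, if_pos hj'.1, Set.indicator_of_mem
      (Set.mem_Iic.2 ((le_div_iff₀ (by exact_mod_cast hw)).2 hj'.2)), fdpWeight, if_pos hj]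
    gcongr
    exact threshold_le_card_selection
  · rw [fdpWeight, if_neg hj, zero_div]
    exact Set.indicator_nonneg (fun _ _ => by positivity) _

end Selection

section Measurability

variable {α ι : Type*} [MeasurableSpace α] [Fintype ι]

lemma measurable_card_of_measurableSet_mem {S : α → Finset ι}
    (hS : ∀ i, MeasurableSet {a | i ∈ S a}) : Measurable fun a => #(S a) := by
  have h : (fun a => #(S a)) = fun a => ∑ i, if i ∈ S a then 1 else 0 := by
    ext a
    simp
  rw [h]
  exact Finset.measurable_sum _ fun i _ => Measurable.ite (hS i) measurable_const measurable_const

lemma measurable_fdpWeight [DecidableEq ι] {S : α → Finset ι}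
    (hS : ∀ i, MeasurableSet {a | i ∈ S a}) (j : ι) :
    Measurable fun a => fdpWeight (S a) j := by
  have := measurable_card_of_measurableSet_mem hS
  unfold fdpWeight
  exact (Measurable.ite (hS j) measurable_const measurable_const).div (by fun_prop)

variable {p s x : ι → α → ℝ} {w : ι → α → ℕ}

lemma measurableSet_mem_candidates (hp : ∀ i, Measurable (p i)) (hs : ∀ i, Measurable (s i))
    (hw : ∀ i, Measurable (w i)) (hx : ∀ i, Measurable (x i)) (i : ι) (r : ℕ) :
    MeasurableSet {a | i ∈ candidates (p · a) (s · a) (w · a) (x · a) r} := by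
  simp only [candidates, mem_filter_univ]
  exact (measurableSet_le (hp i) (hs i)).inter (measurableSet_le
    (f := fun a => x i a * w i a) (by fun_prop) measurable_const)

lemma measurable_threshold (hp : ∀ i, Measurable (p i)) (hs : ∀ i, Measurable (s i))
    (hw : ∀ i, Measurable (w i)) (hx : ∀ i, Measurable (x i)) (n : ℕ) :
    Measurable fun a => threshold (p · a) (s · a) (w · a) n (x · a) :=
  measurable_findGreatest fun r _ => measurableSet_le measurable_const
    (measurable_card_of_measurableSet_mem (measurableSet_mem_candidates hp hs hw hx · r))

lemma measurableSet_mem_selection (hp : ∀ i, Measurable (p i)) (hs : ∀ i, Measurable (s i))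
    (hw : ∀ i, Measurable (w i)) (hx : ∀ i, Measurable (x i)) (n : ℕ) (i : ι) :
    MeasurableSet {a | i ∈ selection (p · a) (s · a) (w · a) n (x · a)} := by
  have h : Measurable fun z : α × ℕ =>
      i ∈ candidates (p · z.1) (s · z.1) (w · z.1) (x · z.1) z.2 :=
    measurable_from_prod_countable_left fun r =>
      (measurableSet_mem_candidates hp hs hw hx i r).mem
  exact (h.comp (measurable_id.prodMk (measurable_threshold hp hs hw hx n))).setOf

lemma measurable_fdpWeight_selection [DecidableEq ι] (hp : ∀ i, Measurable (p i))
    (hs : ∀ i, Measurable (s i)) (hw : ∀ i, Measurable (w i)) (hx : ∀ i, Measurable (x i))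
    (n : ℕ) (j : ι) :
    Measurable fun a => fdpWeight (selection (p · a) (s · a) (w · a) n (x · a)) j :=
  measurable_fdpWeight (measurableSet_mem_selection hp hs hw hx n) j

end Measurability

section Probability

def IsSuperUniform (μ : Measure ℝ) : Prop := ∀ t, 0 ≤ t → μ.real (Set.Iic t) ≤ t

lemma isSuperUniform_volume_restrict_Icc : IsSuperUniform (volume.restrict (Set.Icc 0 1)) := by
  intro t ht
  rw [measureReal_restrict_apply measurableSet_Iic]
  calc volume.real (Set.Iic t ∩ Set.Icc 0 1)
      ≤ volume.real (Set.Icc 0 t) :=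
        measureReal_mono (fun u hu => ⟨hu.2.1, hu.1⟩) measure_Icc_lt_top.ne
    _ = t := by simp [ht]

lemma integral_pi_le_of_forall_integral_insertNth_le {n : ℕ} {α : Fin (n + 1) → Type*}
    [∀ i, MeasurableSpace (α i)] (μ : ∀ i, Measure (α i))
    [∀ i, IsProbabilityMeasure (μ i)] (j : Fin (n + 1)) {f : (∀ i, α i) → ℝ}
    (hf : Integrable f (Measure.pi μ)) {c : ℝ}
    (hc : ∀ y, ∫ u, f (j.insertNth u y) ∂μ j ≤ c) : ∫ x, f x ∂Measure.pi μ ≤ c := by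
  have e := (measurePreserving_piFinSuccAbove μ j).symm
  have hfe : Integrable (fun z => f (j.insertNth z.1 z.2))
      ((μ j).prod (Measure.pi fun i => μ (j.succAbove i))) :=
    (e.integrable_comp_emb (MeasurableEquiv.measurableEmbedding _)).2 hf
  calc ∫ x, f x ∂Measure.pi μ
      = ∫ y, ∫ u, f (j.insertNth u y) ∂μ j ∂Measure.pi fun i => μ (j.succAbove i) := by
        rw [← e.integral_comp']
        exact integral_prod_symm _ hfe
    _ ≤ ∫ _, c ∂Measure.pi fun i => μ (j.succAbove i) :=
        integral_mono hfe.integral_prod_right (integrable_const c) hc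
    _ = c := by simp

variable {m n : ℕ} {μ : Fin m → Measure ℝ} [∀ i, IsProbabilityMeasure (μ i)]

theorem integral_fdpWeight_selection_le (hμ : ∀ i, IsSuperUniform (μ i))
    (p s : Fin m → ℝ) (w : Fin m → ℕ) (j : Fin m) (hw : 0 < w j) :
    ∫ x, fdpWeight (selection p s w n x) j ∂Measure.pi μ ≤
      (if p j ≤ s j then 1 else 0) / w j := by
  obtain ⟨k, rfl⟩ : ∃ k, m = k + 1 := Nat.exists_eq_add_one.2 j.pos
  have hmeas : Measurable fun x => fdpWeight (selection p s w n x) j :=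
    measurable_fdpWeight_selection (fun _ => measurable_const) (fun _ => measurable_const)
      (fun _ => measurable_const) measurable_pi_apply n j
  refine integral_pi_le_of_forall_integral_insertNth_le μ j (Integrable.of_bound
    hmeas.aestronglyMeasurable 1 (ae_of_all _ fun _ => norm_fdpWeight_le_one _ _)) fun y => ?_
  set r := threshold p s w n (j.insertNth 0 y)
  set c := (if p j ≤ s j then (1 : ℝ) else 0) / max 1 (r : ℝ)
  have hpt (u : ℝ) : fdpWeight (selection p s w n (j.insertNth u y)) j ≤
      (Set.Iic ((r : ℝ) / w j)).indicator (fun _ => c) u := by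
    simpa [Fin.update_insertNth] using fdpWeight_selection_le (x := j.insertNth u y) hw
  calc ∫ u, fdpWeight (selection p s w n (j.insertNth u y)) j ∂μ j
      ≤ ∫ u, (Set.Iic ((r : ℝ) / w j)).indicator (fun _ => c) u ∂μ j :=
        integral_mono_of_nonneg (ae_of_all _ fun _ => fdpWeight_nonneg _ _)
          ((integrable_const c).indicator measurableSet_Iic) (ae_of_all _ hpt)
    _ = (μ j).real (Set.Iic ((r : ℝ) / w j)) * c := integral_indicator_const _ measurableSet_Iic
    _ ≤ r / w j * c := by gcongr; exact hμ j _ (by positivity)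
    _ ≤ (if p j ≤ s j then 1 else 0) / w j := by
        rw [div_mul_div_comm, mul_comm (r : ℝ), ← div_mul_div_comm]
        exact mul_le_of_le_one_right (by positivity)
          (div_le_one_of_le₀ (le_max_right _ _) (by positivity))

variable {D : Type*} [MeasurableSpace D] {p s N : Fin m → D → ℝ} {w : Fin m → D → ℕ}

lemma measurable_fdpWeight_selection_prod (hp : ∀ i, Measurable (p i))
    (hs : ∀ i, Measurable (s i)) (hw : ∀ i, Measurable (w i)) (j : Fin m) :
    Measurable fun z : (Fin m → ℝ) × D =>
      fdpWeight (selection (p · z.2) (s · z.2) (w · z.2) n z.1) j :=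
  measurable_fdpWeight_selection (fun i => (hp i).comp measurable_snd)
    (fun i => (hs i).comp measurable_snd) (fun i => (hw i).comp measurable_snd)
    (fun i => (measurable_pi_apply i).comp measurable_fst) n j

theorem integral_prod_mul_fdpWeight_selection_le
    (hμ : ∀ i, IsSuperUniform (μ i)) {ν : Measure D} [SFinite ν]
    (hp : ∀ i, Measurable (p i)) (hs : ∀ i, Measurable (s i)) (hw : ∀ i, Measurable (w i))
    {j : Fin m} (hN : Integrable (N j) ν) (hN0 : ∀ᵐ d ∂ν, 0 ≤ N j d)
    (hw0 : ∀ᵐ d ∂ν, 0 < w j d) :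
    ∫ z, N j z.2 * fdpWeight (selection (p · z.2) (s · z.2) (w · z.2) n z.1) j
        ∂(Measure.pi μ).prod ν ≤
      ∫ d, N j d * (if p j d ≤ s j d then 1 else 0) / w j d ∂ν := by
  have hG : Integrable (fun z : (Fin m → ℝ) × D =>
      N j z.2 * fdpWeight (selection (p · z.2) (s · z.2) (w · z.2) n z.1) j)
      ((Measure.pi μ).prod ν) :=
    (hN.comp_snd _).mul_bdd (measurable_fdpWeight_selection_prod hp hs hw j).aestronglyMeasurable
      (ae_of_all _ fun _ => norm_fdpWeight_le_one _ _)
  have hH : Integrable (fun d => N j d * (if p j d ≤ s j d then 1 else 0) / w j d) ν := by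
    simp_rw [mul_div_assoc]
    refine hN.mul_bdd (Measurable.aestronglyMeasurable ?_) (c := 1) ?_
    · exact (Measurable.ite (measurableSet_le (hp j) (hs j)) measurable_const measurable_const).div
        (by fun_prop)
    · filter_upwards [hw0] with d hd
      rw [Real.norm_of_nonneg (by positivity)]
      have hw1 : (1 : ℝ) ≤ w j d := Nat.one_le_cast.2 hd
      exact div_le_one_of_le₀ (by split_ifs <;> linarith) (by positivity)
  rw [integral_prod_symm _ hG]
  refine integral_mono_ae hG.integral_prod_right hH ?_
  filter_upwards [hN0, hw0] with d hd hd'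
  rw [integral_const_mul, mul_div_assoc]
  exact mul_le_mul_of_nonneg_left (integral_fdpWeight_selection_le hμ _ _ _ j hd') hd

theorem integral_mul_fdpWeight_selection_le {Ω : Type*} [MeasurableSpace Ω] {P : Measure Ω}
    [IsFiniteMeasure P] (hμ : ∀ i, IsSuperUniform (μ i))
    {ξ : Fin m → Ω → ℝ} {Y : Ω → D} (hξ : ∀ i, Measurable (ξ i)) (hY : Measurable Y)
    (hlaw : P.map (fun ω => ((ξ · ω), Y ω)) = (Measure.pi μ).prod (P.map Y))
    (hp : ∀ i, Measurable (p i)) (hs : ∀ i, Measurable (s i)) (hw : ∀ i, Measurable (w i))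
    {j : Fin m} (hN : Measurable (N j)) (hNint : Integrable (fun ω => N j (Y ω)) P)
    (hN0 : ∀ ω, 0 ≤ N j (Y ω)) (hw0 : ∀ ω, 0 < w j (Y ω)) :
    ∫ ω, N j (Y ω) *
        fdpWeight (selection (p · (Y ω)) (s · (Y ω)) (w · (Y ω)) n (ξ · ω)) j ∂P ≤
      ∫ ω, N j (Y ω) * (if p j (Y ω) ≤ s j (Y ω) then 1 else 0) / w j (Y ω) ∂P := by
  have hG : Measurable fun z : (Fin m → ℝ) × D =>
      N j z.2 * fdpWeight (selection (p · z.2) (s · z.2) (w · z.2) n z.1) j :=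
    (hN.comp measurable_snd).mul (measurable_fdpWeight_selection_prod hp hs hw j)
  have hH : Measurable fun d => N j d * (if p j d ≤ s j d then 1 else 0) / w j d :=
    (hN.mul (Measurable.ite (measurableSet_le (hp j) (hs j)) measurable_const
      measurable_const)).div (by fun_prop)
  have hgood : ∀ᵐ d ∂P.map Y, 0 ≤ N j d ∧ 0 < w j d :=
    (ae_map_iff hY.aemeasurable ((measurableSet_le measurable_const hN).inter
      (measurableSet_lt measurable_const (hw j)))).2 (ae_of_all _ fun ω => ⟨hN0 ω, hw0 ω⟩)
  rw [← integral_map ((measurable_pi_lambda _ hξ).prodMk hY).aemeasurable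
      hG.aestronglyMeasurable,
    hlaw, ← integral_map hY.aemeasurable hH.aestronglyMeasurable]
  exact integral_prod_mul_fdpWeight_selection_le hμ hp hs hw
    ((integrable_map_measure hN.aestronglyMeasurable hY.aemeasurable).2 hNint)
    (hgood.mono fun _ => And.left) (hgood.mono fun _ => And.right)

end Probability

end Pruning

end

/-- FDR reduction for heterogeneous pruning: with data-measurable `p_j, s_j, R_j, N_j` and
i.i.d. uniform `ξ_j` independent of the data, the expected false discovery proportion of the
heterogeneously pruned selection set is bounded by `∑ⱼ E[N_j 1{p_j ≤ s_j}/R_j]`. -/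
theorem stmt8 {Ω : Type*} [MeasurableSpace Ω] (P : Measure Ω) [IsProbabilityMeasure P]
    (m : ℕ) (p s : Fin m → Ω → ℝ) (R : Fin m → Ω → ℕ) (N : Fin m → Ω → ℝ)
    (hpm : ∀ j, Measurable (p j)) (hsm : ∀ j, Measurable (s j))
    (hRm : ∀ j, Measurable (R j)) (hNm : ∀ j, Measurable (N j))
    (hR1 : ∀ j ω, 1 ≤ R j ω) (hN : ∀ j ω, N j ω = 0 ∨ N j ω = 1)
    (ξ : Fin m → Ω → ℝ) (hξm : ∀ j, Measurable (ξ j))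
    (hξlaw : ∀ j, Measure.map (ξ j) P = volume.restrict (Set.Icc 0 1))
    (hξindep : iIndepFun ξ P)
    (hindep : IndepFun (fun ω => fun j => ξ j ω)
      (fun ω => fun j => (p j ω, s j ω, R j ω, N j ω)) P) :
    ∀ rstar : Ω → ℕ, rstar = (fun ω => Nat.findGreatest
        (fun r => r ≤ (univ.filter
          (fun j => p j ω ≤ s j ω ∧ ξ j ω * R j ω ≤ r)).card) m) →
    ∀ Rsel : Ω → Finset (Fin m), Rsel = (fun ω =>
        univ.filter (fun j => p j ω ≤ s j ω ∧ ξ j ω * R j ω ≤ rstar ω)) →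
      ∫ ω, (∑ j, N j ω * (if j ∈ Rsel ω then (1 : ℝ) else 0)) /
          max 1 ((Rsel ω).card : ℝ) ∂P ≤
        ∑ j, ∫ ω, N j ω * (if p j ω ≤ s j ω then (1 : ℝ) else 0) / (R j ω : ℝ) ∂P := by
  rintro _ rfl _ rfl
  have : IsProbabilityMeasure (volume.restrict (Set.Icc (0 : ℝ) 1)) := ⟨by simp⟩
  set Y := fun ω j => (p j ω, s j ω, R j ω, N j ω)
  have hY : Measurable Y :=
    measurable_pi_lambda _ fun j => (hpm j).prodMk ((hsm j).prodMk ((hRm j).prodMk (hNm j)))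
  have hlaw : P.map (fun ω => ((ξ · ω), Y ω)) =
      (Measure.pi fun _ => volume.restrict (Set.Icc (0 : ℝ) 1)).prod (P.map Y) := by
    rw [(indepFun_iff_map_prod_eq_prod_map_map (measurable_pi_lambda _ hξm).aemeasurable
        hY.aemeasurable).1 hindep,
      (iIndepFun_iff_map_fun_eq_pi_map fun i => (hξm i).aemeasurable).1 hξindep]
    simp_rw [hξlaw]
  have hN01 (j : Fin m) (ω : Ω) : 0 ≤ N j ω ∧ N j ω ≤ 1 := by
    rcases hN j ω with h | h <;> simp [h]
  have hNint (j : Fin m) : Integrable (N j) P :=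
    .of_bound (hNm j).aestronglyMeasurable 1
      (ae_of_all _ fun ω => (Real.norm_of_nonneg (hN01 j ω).1).trans_le (hN01 j ω).2)
  calc _ = ∑ j, ∫ ω, N j ω * Pruning.fdpWeight
        (Pruning.selection (p · ω) (s · ω) (R · ω) m (ξ · ω)) j ∂P := by
        simp_rw [sum_div, mul_div_assoc]
        exact integral_finsetSum (f := fun j ω => N j ω * Pruning.fdpWeight
          (Pruning.selection (p · ω) (s · ω) (R · ω) m (ξ · ω)) j) _ fun j _ =>
          (hNint j).mul_bdd
            (Pruning.measurable_fdpWeight_selection hpm hsm hRm hξm m j).aestronglyMeasurable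
            (ae_of_all _ fun _ => Pruning.norm_fdpWeight_le_one _ _)
    _ ≤ _ := sum_le_sum fun j _ => Pruning.integral_mul_fdpWeight_selection_le
        (p := fun j d => (d j).1) (s := fun j d => (d j).2.1) (w := fun j d => (d j).2.2.1)
        (N := fun j d => (d j).2.2.2)
        (fun _ => Pruning.isSuperUniform_volume_restrict_Icc) hξm hY hlaw
        (by fun_prop) (by fun_prop) (by fun_prop) (by fun_prop) (hNint j) (fun ω => (hN01 j ω).1)
        (hR1 j)
end

section
/- (Leave-one-out stability of the BH rejection set under lowering a rejected p-value.) Let $p_1,\dots,p_m \in [0,1]$ and let $\mathcal{R}_{BH}(p)$ denote the Benjamini–Hochberg rejection set at level $q$: $\mathcal{R}_{BH}(p) = \{j : p_j \le q k^*/m\}$ where $k^* = \max\{k \ge 0 : \#\{j : p_j \le qk/m\} \ge k\}$. If $j \in \mathcal{R}_{BH}(p)$ and $p'$ is obtained from $p$ by replacing $p_j$ with any value $p_j' \le p_j$, then $\mathcal{R}_{BH}(p') = \mathcal{R}_{BH}(p)$. -/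
open Finset

/-- The largest `k` with `#{j : p_j ≤ qk/m} ≥ k` (the Benjamini–Hochberg step-up count). -/
noncomputable def BHkstar (q : ℝ) {m : ℕ} (p : Fin m → ℝ) : ℕ :=
  Nat.findGreatest (fun k => k ≤ (univ.filter (fun j => p j ≤ q * k / m)).card) m

/-- The Benjamini–Hochberg rejection set at level `q`: `{j : p_j ≤ q k*/m}`. -/
noncomputable def BHset (q : ℝ) {m : ℕ} (p : Fin m → ℝ) : Finset (Fin m) :=
  univ.filter (fun j => p j ≤ q * (BHkstar q p) / m)

/-- Leave-one-out stability of the BH rejection set: lowering an already-rejected p-value does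
not change the BH rejection set. -/
theorem stmt9 (q : ℝ) (hq0 : 0 < q) (hq1 : q < 1) (m : ℕ) (p : Fin m → ℝ)
    (hp : ∀ j, 0 ≤ p j ∧ p j ≤ 1) (j : Fin m) (hj : j ∈ BHset q p)
    (pj' : ℝ) (hpj'0 : 0 ≤ pj') (hpj' : pj' ≤ p j) :
    BHset q (Function.update p j pj') = BHset q p := by
  classical
  have hm : 0 < m := j.pos
  have hmr : (0:ℝ) < m := by exact_mod_cast hm
  set p' := Function.update p j pj' with hp'def
  have hle : ∀ i, p' i ≤ p i := by
    intro i
    rcases eq_or_ne i j with rfl | h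
    · simpa [p'] using hpj'
    · simp [p', Function.update_of_ne h]
  have hjp : p j ≤ q * (BHkstar q p) / m := by
    simpa [BHset] using hj
  -- for any threshold t ≥ p j, the filters for p and p' coincide
  have hfeq : ∀ t : ℝ, p j ≤ t →
      (univ.filter (fun i => p' i ≤ t)) = (univ.filter (fun i => p i ≤ t)) := by
    intro t ht
    ext i
    simp only [mem_filter, mem_univ, true_and]
    rcases eq_or_ne i j with rfl | h
    · constructor
      · intro _; exact ht
      · intro _; exact le_trans (hle i) ht
    · simp [p', Function.update_of_ne h]
  -- first direction: BHkstar q p ≤ BHkstar q p'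
  have h1 : BHkstar q p ≤ BHkstar q p' := by
    unfold BHkstar
    refine Nat.findGreatest_mono_left (fun k hk => ?_) m
    refine le_trans hk (card_le_card ?_)
    intro i hi
    simp only [mem_filter, mem_univ, true_and] at hi ⊢
    exact le_trans (hle i) hi
  have h2 : BHkstar q p' ≤ BHkstar q p := by
    by_contra h
    push_neg at h
    have hb : BHkstar q p' ≤ m := Nat.findGreatest_le m
    have hthr : p j ≤ q * (BHkstar q p') / m := by
      refine le_trans hjp ?_
      gcongr
    have hne : BHkstar q p' ≠ 0 := Nat.pos_iff_ne_zero.mp (lt_of_le_of_lt (Nat.zero_le _) h)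
    have hspec : (BHkstar q p') ≤
        (univ.filter (fun i => p' i ≤ q * (BHkstar q p') / m)).card :=
      Nat.findGreatest_of_ne_zero (P := fun k =>
        k ≤ (univ.filter (fun i => p' i ≤ q * k / m)).card) (n := m) rfl hne
    rw [hfeq _ hthr] at hspec
    exact Nat.findGreatest_is_greatest (P := fun k =>
      k ≤ (univ.filter (fun i => p i ≤ q * k / m)).card) h hb hspec
  have hk : BHkstar q p' = BHkstar q p := le_antisymm h2 h1
  unfold BHset
  rw [hk]
  exact hfeq _ hjp
end

section
/- (Self-consistency of BH membership via the leave-one-out set.) Fix $q\in(0,1)$ and p-values $p_1,\dots,p_m\in[0,1]$. For index $j$, let $\hat{\mathcal{R}}_{j\to0}$ be the BH($q$) rejection set applied to $(p_1,\dots,p_{j-1},0,p_{j+1},\dots,p_m)$ (so $j\in\hat{\mathcal{R}}_{j\to0}$ always), and let $\hat{\mathcal{R}}_j$ be the BH($q$) rejection set applied to $(p_1,\dots,p_m)$. Then $j \in \hat{\mathcal{R}}_j$ if and only if $p_j \le q|\hat{\mathcal{R}}_{j\to0}|/m$. -/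
open Finset

/-! Lowering `p_j` to `0` can only raise the step-up count `k*`, which gives the forward
direction. Conversely, if `p_j` lies below the threshold of the leave-one-out vector, both vectors
reject the same indices at that threshold, so the original `k*` is at least the leave-one-out one. -/

section BenjaminiHochberg

variable {q : ℝ} {m : ℕ}

theorem BHkstar_le_card_BHset (p : Fin m → ℝ) : BHkstar q p ≤ #(BHset q p) :=
  Nat.findGreatest_spec (P := fun k => k ≤ #(univ.filter fun i => p i ≤ q * k / m))
    (Nat.zero_le m) (Nat.zero_le _)

theorem card_BHset_eq_BHkstar (hq : 0 ≤ q) (p : Fin m → ℝ) : #(BHset q p) = BHkstar q p := by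
  refine le_antisymm ?_ (BHkstar_le_card_BHset p)
  by_contra! hlt
  have hlt_m : BHkstar q p < m := by
    refine (Nat.findGreatest_le m).lt_of_ne fun (h : BHkstar q p = m) => ?_
    have := card_le_univ (BHset q p)
    rw [Fintype.card_fin] at this
    omega
  refine Nat.findGreatest_is_greatest (Nat.lt_succ_self _) hlt_m ?_
  calc BHkstar q p + 1 ≤ #(BHset q p) := hlt
    _ ≤ #(univ.filter fun i => p i ≤ q * ↑(BHkstar q p + 1) / m) := by
      refine card_le_card (monotone_filter_right _ fun i _ hi => hi.trans ?_)
      gcongr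
      exact_mod_cast Nat.le_succ _

theorem BHkstar_le_BHkstar_of_subset {p p' : Fin m → ℝ}
    (h : BHset q p ⊆ univ.filter fun i => p' i ≤ q * BHkstar q p / m) :
    BHkstar q p ≤ BHkstar q p' :=
  Nat.le_findGreatest (Nat.findGreatest_le m) ((BHkstar_le_card_BHset p).trans (card_le_card h))

theorem BHkstar_antitone {p p' : Fin m → ℝ} (h : p' ≤ p) : BHkstar q p ≤ BHkstar q p' :=
  BHkstar_le_BHkstar_of_subset <| monotone_filter_right _ fun i _ hi => (h i).trans hi

theorem mem_BHset_of_le (hq : 0 ≤ q) {p : Fin m → ℝ} {i : Fin m} {k : ℕ}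
    (hk : k ≤ BHkstar q p) (hi : p i ≤ q * k / m) : i ∈ BHset q p :=
  mem_filter.mpr ⟨mem_univ i, hi.trans (by gcongr)⟩

end BenjaminiHochberg

theorem stmt10_general (q : ℝ) (hq0 : 0 < q) (m : ℕ) (p : Fin m → ℝ)
    (hp : ∀ j, 0 ≤ p j ∧ p j ≤ 1) (j : Fin m) :
    j ∈ BHset q (Function.update p j 0) ∧
      (j ∈ BHset q p ↔ p j ≤ q * ((BHset q (Function.update p j 0)).card : ℝ) / m) := by
  set p₀ := Function.update p j 0
  have hp₀ : p₀ ≤ p := update_le_iff.mpr ⟨(hp j).1, fun _ _ => le_rfl⟩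
  rw [card_BHset_eq_BHkstar hq0.le]
  have hj₀ : j ∈ BHset q p₀ :=
    mem_BHset_of_le hq0.le le_rfl (by simp only [p₀, Function.update_self]; positivity)
  refine ⟨hj₀, fun hj => ?_, fun hj => ?_⟩
  · exact (mem_filter.mp hj).2.trans (by gcongr; exact BHkstar_antitone hp₀)
  · have hsub : BHset q p₀ ⊆ univ.filter fun i => p i ≤ q * BHkstar q p₀ / m := by
      intro i hi
      rcases eq_or_ne i j with rfl | hij
      · exact mem_filter.mpr ⟨mem_univ i, hj⟩
      · simpa [BHset, p₀, hij] using hi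
    exact mem_BHset_of_le hq0.le (BHkstar_le_BHkstar_of_subset hsub) hj

/-- Self-consistency of BH membership via the leave-one-out set: `j` is rejected by BH on
`(p_1,…,p_m)` if and only if `p_j ≤ q|R̂_{j→0}|/m`, where `R̂_{j→0}` is the BH rejection set with
`p_j` replaced by `0` (which always contains `j`). -/
theorem stmt10 (q : ℝ) (hq0 : 0 < q) (hq1 : q < 1) (m : ℕ) (p : Fin m → ℝ)
    (hp : ∀ j, 0 ≤ p j ∧ p j ≤ 1) (j : Fin m) :
    j ∈ BHset q (Function.update p j 0) ∧
      (j ∈ BHset q p ↔ p j ≤ q * ((BHset q (Function.update p j 0)).card : ℝ) / m) :=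
  stmt10_general q hq0 m p hp j
end

section
/- (FDR of eBH with generalized e-values for random hypotheses.) Let $e_1,\dots,e_m$ be nonnegative random variables and $\mathcal{H}_0 \subseteq \{1,\dots,m\}$ a random set such that $\mathbb{E}[e_j\mathbf{1}\{j\in\mathcal{H}_0\}] \le 1$ for every $j$. Fix $q\in(0,1)$, let $\hat{k} = \max\{k \ge 0: \#\{j: e_j \ge m/(qk)\} \ge k\}$ and $\mathcal{R} = \{j : e_j \ge m/(q\hat{k})\}$ (empty if $\hat k = 0$). Then $\mathbb{E}\Big[\frac{|\mathcal{R}\cap\mathcal{H}_0|}{\max(1,|\mathcal{R}|)}\Big] \le q$. -/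
open MeasureTheory Finset
open scoped Classical

/-- FDR of eBH with generalized e-values for random hypotheses: if `E[e_j 1{j ∈ H₀}] ≤ 1` for
every `j`, then the eBH procedure at level `q` controls the FDR (over the random null set `H₀`)
at level `q`. -/
theorem stmt14 {Ω : Type*} [MeasurableSpace Ω] (P : Measure Ω) [IsProbabilityMeasure P]
    (m : ℕ) (q : ℝ) (hq0 : 0 < q) (hq1 : q < 1)
    (e : Fin m → Ω → ℝ) (he0 : ∀ j ω, 0 ≤ e j ω) (hem : ∀ j, Measurable (e j))
    (H0 : Ω → Finset (Fin m)) (hH0 : ∀ j, MeasurableSet {ω | j ∈ H0 ω})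
    (heint : ∀ j, Integrable (e j) P)
    (hyp : ∀ j, ∫ ω, e j ω * (if j ∈ H0 ω then (1 : ℝ) else 0) ∂P ≤ 1) :
    ∀ khat : Ω → ℕ, khat = (fun ω => Nat.findGreatest
        (fun k => k ≤ (univ.filter (fun j => (m : ℝ) / (q * k) ≤ e j ω)).card) m) →
    ∀ Rsel : Ω → Finset (Fin m), Rsel = (fun ω => if khat ω = 0 then (∅ : Finset (Fin m))
        else univ.filter (fun j => (m : ℝ) / (q * khat ω) ≤ e j ω)) →
      ∫ ω, ((Rsel ω ∩ H0 ω).card : ℝ) / max 1 ((Rsel ω).card : ℝ) ∂P ≤ q := by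
  intro khat hk Rsel hR
  by_cases hm : m = 0
  · subst hm
    have hz : ∀ ω, ((Rsel ω ∩ H0 ω).card : ℝ) / max 1 ((Rsel ω).card : ℝ) = 0 := by
      intro ω
      have h1 : Rsel ω ∩ H0 ω = ∅ :=
        Finset.eq_empty_of_forall_notMem (fun j _ => j.elim0)
      rw [h1]; simp
    simp only [hz, integral_zero]
    linarith
  have hm0 : (0 : ℝ) < m := by
    exact_mod_cast Nat.pos_of_ne_zero hm
  set g : Ω → ℝ := fun ω => (q / m) * ∑ j, e j ω * (if j ∈ H0 ω then (1 : ℝ) else 0) with hg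
  have hint_j : ∀ j, Integrable (fun ω => e j ω * (if j ∈ H0 ω then (1 : ℝ) else 0)) P := by
    intro j
    refine (heint j).mono' ?_ ?_
    · exact ((hem j).mul (Measurable.ite (hH0 j) measurable_const
        measurable_const)).aestronglyMeasurable
    · filter_upwards with ω
      rw [Real.norm_eq_abs, abs_mul, abs_of_nonneg (he0 j ω)]
      rcases em (j ∈ H0 ω) with h | h <;> simp [h, he0 j ω]
  have hgint : Integrable g P :=
    (integrable_finset_sum _ (fun j _ => hint_j j)).const_mul _
  have hnn : ∀ ω, 0 ≤ ((Rsel ω ∩ H0 ω).card : ℝ) / max 1 ((Rsel ω).card : ℝ) := by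
    intro ω
    apply div_nonneg (by positivity)
    exact le_trans zero_le_one (le_max_left _ _)
  have hgnn : ∀ ω, 0 ≤ g ω := by
    intro ω
    apply mul_nonneg (by positivity)
    apply Finset.sum_nonneg
    intro j _
    rcases em (j ∈ H0 ω) with h | h <;> simp [h, he0 j ω]
  have hpt : ∀ ω, ((Rsel ω ∩ H0 ω).card : ℝ) / max 1 ((Rsel ω).card : ℝ) ≤ g ω := by
    intro ω
    by_cases hk0 : khat ω = 0
    · have h1 : Rsel ω = ∅ := by rw [hR]; simp [hk0]
      rw [h1]
      simpa using hgnn ω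
    · have hspec : khat ω ≤ (univ.filter (fun j => (m : ℝ) / (q * khat ω) ≤ e j ω)).card := by
        have := Nat.findGreatest_of_ne_zero (congrFun hk ω).symm hk0
        simpa [hk] using this
      have hRω : Rsel ω = univ.filter (fun j => (m : ℝ) / (q * khat ω) ≤ e j ω) := by
        rw [hR]; simp [hk0]
      have hk1 : 1 ≤ khat ω := Nat.one_le_iff_ne_zero.mpr hk0
      have hkR : (khat ω : ℝ) ≤ ((Rsel ω).card : ℝ) := by
        rw [hRω]; exact_mod_cast hspec
      have hk1' : (1 : ℝ) ≤ (khat ω : ℝ) := by exact_mod_cast hk1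
      set M : ℝ := max 1 ((Rsel ω).card : ℝ) with hM
      have hM1 : (0 : ℝ) < M := lt_of_lt_of_le zero_lt_one (le_max_left _ _)
      have hMeq : M = ((Rsel ω).card : ℝ) := max_eq_right (le_trans hk1' hkR)
      have hkM : (khat ω : ℝ) ≤ M := hMeq ▸ hkR
      rw [div_le_iff₀ hM1]
      have key : ∀ j ∈ Rsel ω ∩ H0 ω,
          (1 : ℝ) ≤ (q / m) * (e j ω * (if j ∈ H0 ω then (1 : ℝ) else 0)) * M := by
        intro j hj
        rw [Finset.mem_inter] at hj
        have hjH : j ∈ H0 ω := hj.2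
        have hje : (m : ℝ) / (q * khat ω) ≤ e j ω := by
          have := hj.1
          rw [hRω, Finset.mem_filter] at this
          exact this.2
        simp only [hjH, if_true, mul_one]
        have hqk : (0 : ℝ) < q * khat ω := by positivity
        have h1 : (m : ℝ) / (q * khat ω) * (khat ω) ≤ e j ω * M := by
          apply mul_le_mul hje hkM (by positivity)
          exact le_trans (le_of_lt (div_pos hm0 hqk)) hje
        have h2 : (m : ℝ) / q ≤ e j ω * M := by
          calc (m : ℝ) / q = (m : ℝ) / (q * khat ω) * (khat ω) := by
                field_simp
            _ ≤ e j ω * M := h1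
        rw [div_le_iff₀ hq0] at h2
        calc (1 : ℝ) = (q / m) * ((m : ℝ) / q) := by field_simp
          _ ≤ (q / m) * (e j ω * M) := by
              apply mul_le_mul_of_nonneg_left _ (by positivity)
              rw [div_le_iff₀ hq0]; linarith
          _ = (q / m) * e j ω * M := by ring
      calc ((Rsel ω ∩ H0 ω).card : ℝ)
          = ∑ j ∈ Rsel ω ∩ H0 ω, (1 : ℝ) := by simp
        _ ≤ ∑ j ∈ Rsel ω ∩ H0 ω,
              (q / m) * (e j ω * (if j ∈ H0 ω then (1 : ℝ) else 0)) * M :=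
            Finset.sum_le_sum key
        _ ≤ ∑ j, (q / m) * (e j ω * (if j ∈ H0 ω then (1 : ℝ) else 0)) * M := by
            apply Finset.sum_le_sum_of_subset_of_nonneg (Finset.subset_univ _)
            intro j _ _
            have hej := he0 j ω
            have hind : (0 : ℝ) ≤ if j ∈ H0 ω then (1 : ℝ) else 0 := by positivity
            exact mul_nonneg (mul_nonneg (by positivity) (mul_nonneg hej hind))
              (le_of_lt hM1)
        _ = g ω * M := by
            simp only [hg, Finset.mul_sum, Finset.sum_mul]
  have hle : ∫ ω, ((Rsel ω ∩ H0 ω).card : ℝ) / max 1 ((Rsel ω).card : ℝ) ∂P ≤ ∫ ω, g ω ∂P := by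
    apply integral_mono_of_nonneg
    · filter_upwards with ω using hnn ω
    · exact hgint
    · filter_upwards with ω using hpt ω
  refine le_trans hle ?_
  have : ∫ ω, g ω ∂P = (q / m) * ∑ j, ∫ ω, e j ω * (if j ∈ H0 ω then (1 : ℝ) else 0) ∂P := by
    rw [hg, integral_const_mul, integral_finset_sum _ (fun j _ => hint_j j)]
  rw [this]
  have hsum : ∑ j, ∫ ω, e j ω * (if j ∈ H0 ω then (1 : ℝ) else 0) ∂P ≤ (m : ℝ) := by
    calc ∑ j, ∫ ω, e j ω * (if j ∈ H0 ω then (1 : ℝ) else 0) ∂P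
        ≤ ∑ _j : Fin m, (1 : ℝ) := Finset.sum_le_sum (fun j _ => hyp j)
      _ = (m : ℝ) := by simp
  calc (q / m) * ∑ j, ∫ ω, e j ω * (if j ∈ H0 ω then (1 : ℝ) else 0) ∂P
      ≤ (q / m) * m := by
        apply mul_le_mul_of_nonneg_left hsum (by positivity)
    _ = q := by field_simp
end

section
/- (FDR inflation bound under weight misestimation, discrete core.) Let $w_1,\dots,w_n, w_{n+1} > 0$ be true weights and $\hat{w}_1,\dots,\hat{w}_{n+1} > 0$ estimated weights with $\hat{\gamma} = \max_i \max(\hat{w}_i/w_i,\ w_i/\hat{w}_i)$. Fix real scores $v_1,\dots,v_{n+1}$ and denote, for an index $I$, $\hat{W}_- = \sum_{i\le n}\hat{w}_i\mathbf{1}\{v_i < v_I\} + \hat{w}_{n+1}$, $\hat{W}_+ = \sum_{i\le n}\hat{w}_i\mathbf{1}\{v_i > v_I\}$, and similarly $W_-, W_+$ with the true weights. If $\frac{\hat{W}_-}{\hat{W}_- + \hat{W}_+} \le \alpha$ for some $\alpha \in (0,1)$, then $\frac{W_-}{W_- + W_+} \le \frac{\hat{\gamma}^2}{\hat{\gamma}^2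 + \frac{1}{\alpha} - 1}$. -/
/-- FDR inflation bound under weight misestimation, discrete core: if the p-value computed with
estimated weights is at most `α`, the p-value computed with the true weights is at most
`γ̂²/(γ̂² + 1/α - 1)`, where `γ̂` bounds all multiplicative weight-estimation errors. -/
theorem stmt15 (n : ℕ) (w what : Fin (n + 1) → ℝ)
    (hw : ∀ i, 0 < w i) (hwhat : ∀ i, 0 < what i)
    (γ : ℝ) (hγ : ∀ i, what i / w i ≤ γ ∧ w i / what i ≤ γ)
    (v : Fin (n + 1) → ℝ) (I : Fin (n + 1)) (α : ℝ) (hα0 : 0 < α) (hα1 : α < 1) :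
    ∀ Wm Wp : (Fin (n + 1) → ℝ) → ℝ,
      Wm = (fun u => (∑ i : Fin n, u i.castSucc * (if v i.castSucc < v I then 1 else 0)) +
        u (Fin.last n)) →
      Wp = (fun u => ∑ i : Fin n, u i.castSucc * (if v I < v i.castSucc then 1 else 0)) →
      Wm what / (Wm what + Wp what) ≤ α →
        Wm w / (Wm w + Wp w) ≤ γ ^ 2 / (γ ^ 2 + 1 / α - 1) := by
  intro Wm Wp hWm hWp hhyp
  subst hWm hWp
  -- basic weight comparisons
  have hγ1 : (1:ℝ) ≤ γ := by
    rcases le_total (w 0) (what 0) with h | h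
    · have := (hγ 0).1
      have : (1:ℝ) ≤ what 0 / w 0 := (one_le_div (hw 0)).2 h
      linarith [(hγ 0).1]
    · have : (1:ℝ) ≤ w 0 / what 0 := (one_le_div (hwhat 0)).2 h
      linarith [(hγ 0).2]
  have hle1 : ∀ i, w i ≤ γ * what i := fun i => by
    have := (hγ i).2
    have h := (div_le_iff₀ (hwhat i)).1 this
    linarith
  have hle2 : ∀ i, what i ≤ γ * w i := fun i => by
    have := (hγ i).1
    have h := (div_le_iff₀ (hw i)).1 this
    linarith
  set a := (∑ i : Fin n, w i.castSucc * (if v i.castSucc < v I then 1 else 0)) + w (Fin.last n) with ha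
  set b := ∑ i : Fin n, w i.castSucc * (if v I < v i.castSucc then 1 else 0) with hb
  set A := (∑ i : Fin n, what i.castSucc * (if v i.castSucc < v I then 1 else 0)) + what (Fin.last n) with hA
  set B := ∑ i : Fin n, what i.castSucc * (if v I < v i.castSucc then 1 else 0) with hB
  have hA0 : 0 < A := by
    have : (0:ℝ) ≤ ∑ i : Fin n, what i.castSucc * (if v i.castSucc < v I then 1 else 0) :=
      Finset.sum_nonneg fun i _ => mul_nonneg (hwhat _).le (by positivity)
    have := hwhat (Fin.last n); rw [hA]; linarith
  have ha0 : 0 < a := by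
    have : (0:ℝ) ≤ ∑ i : Fin n, w i.castSucc * (if v i.castSucc < v I then 1 else 0) :=
      Finset.sum_nonneg fun i _ => mul_nonneg (hw _).le (by positivity)
    have := hw (Fin.last n); rw [ha]; linarith
  have hb0 : 0 ≤ b :=
    Finset.sum_nonneg fun i _ => mul_nonneg (hw _).le (by positivity)
  have hB0 : 0 ≤ B :=
    Finset.sum_nonneg fun i _ => mul_nonneg (hwhat _).le (by positivity)
  have haA : a ≤ γ * A := by
    rw [ha, hA, mul_add, Finset.mul_sum]
    refine add_le_add (Finset.sum_le_sum fun i _ => ?_) (hle1 _)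
    rw [← mul_assoc]
    exact mul_le_mul_of_nonneg_right (hle1 _) (by positivity)
  have hBb : B ≤ γ * b := by
    rw [hB, hb, Finset.mul_sum]
    refine Finset.sum_le_sum fun i _ => ?_
    rw [← mul_assoc]
    exact mul_le_mul_of_nonneg_right (hle2 _) (by positivity)
  -- from the hypothesis: (1/α - 1) * A ≤ B
  have hAB : 0 < A + B := by linarith
  have h1 : A ≤ α * (A + B) := by
    have := (div_le_iff₀ hAB).1 hhyp
    linarith
  have h2 : (1 / α - 1) * A ≤ B := by
    rw [sub_mul, one_mul, sub_le_iff_le_add]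
    rw [div_mul_eq_mul_div, div_le_iff₀ hα0]
    nlinarith
  -- final cross multiplication
  have hγ0 : 0 < γ := lt_of_lt_of_le one_pos hγ1
  have hden2 : 0 < γ ^ 2 + 1 / α - 1 := by
    have : 1 < 1 / α := (one_lt_div hα0).2 hα1
    nlinarith
  have hab : 0 < a + b := by linarith
  rw [div_le_div_iff₀ hab hden2]
  -- a * (γ² + 1/α - 1) ≤ γ² (a+b)  ⟺  a(1/α - 1) ≤ γ² b
  have key : a * (1 / α - 1) ≤ γ ^ 2 * b := by
    have s1 : a * (1 / α - 1) ≤ γ * A * (1 / α - 1) := by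
      have : (0:ℝ) ≤ 1 / α - 1 := by
        have : 1 ≤ 1 / α := (one_le_div hα0).2 hα1.le
        linarith
      exact mul_le_mul_of_nonneg_right haA this
    have s2 : γ * A * (1 / α - 1) = γ * ((1 / α - 1) * A) := by ring
    have s3 : γ * ((1 / α - 1) * A) ≤ γ * B := mul_le_mul_of_nonneg_left h2 hγ0.le
    have s4 : γ * B ≤ γ * (γ * b) := mul_le_mul_of_nonneg_left hBb hγ0.le
    calc a * (1 / α - 1) ≤ γ * A * (1 / α - 1) := s1
      _ = γ * ((1 / α - 1) * A) := s2
      _ ≤ γ * B := s3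
      _ ≤ γ * (γ * b) := s4
      _ = γ ^ 2 * b := by ring
  nlinarith
end
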